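/- Vacuum Markov rate: for m ≥ 0 and ω ∈ ℝ, the distributional integral g²∫ d³k/((2π)³ 2E_k) · 2π δ(ω + E_k), with E_k = √(|k|² + m²), evaluates to (g²/(2π)) √(ω² − m²) · Θ(−ω − m). Formally: for every continuous compactly supported test function φ : ℝ → ℝ, ∫_{ℝ³} φ(−E_k)/( (2π)³ 2E_k) · 2π d³k = ∫_ℝ φ(ω) (1/(2π)) √(ω² − m²) Θ(−ω − m) dω. -/

import Mathlib

open MeasureTheory

noncomputable def Ek (m : ℝ) (k : EuclideanSpace ℝ (Fin 3)) : ℝ :=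
  Real.sqrt (‖k‖ ^ 2 + m ^ 2)

noncomputable def heaviside (x : ℝ) : ℝ := if 0 < x then 1 else 0


/-!
The integrand depends on `k` only through `|k|`, so spherical coordinates reduce the
integral to `4π ∫₀^∞ r² ⋯ dr`. On the mass shell `E = √(r² + m²)` one has `r dr = E dE`,
hence `r² dr / E = √(E² - m²) dE` with `E` ranging over `(m, ∞)`; the reflection
`ω = -E` turns this into the integral over `ω < -m`, which is what `heaviside (-ω - m)`
selects.
-/

open Set Real

section

variable {F : Type*} [NormedAddCommGroup F] [NormedSpace ℝ F]

theorem EuclideanSpace.integral_fun_norm_fin_three (f : ℝ → F) :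
    ∫ x : EuclideanSpace ℝ (Fin 3), f ‖x‖ = (4 * π) • ∫ r in Ioi (0 : ℝ), r ^ 2 • f r := by
  rw [integral_fun_norm_addHaar, finrank_euclideanSpace_fin, measureReal_def,
    EuclideanSpace.volume_ball_fin_three, ← Nat.cast_smul_eq_nsmul ℝ, smul_smul]
  congr 1
  rw [ENNReal.ofReal_one, one_pow, one_mul, ENNReal.toReal_ofReal (by positivity)]
  ring

variable {m : ℝ}

theorem hasDerivAt_sqrt_sq_add_sq {r : ℝ} (h : r ^ 2 + m ^ 2 ≠ 0) :
    HasDerivAt (fun r => √(r ^ 2 + m ^ 2)) (r / √(r ^ 2 + m ^ 2)) r := by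
  have hsqrt : √(r ^ 2 + m ^ 2) ≠ 0 := by positivity
  convert ((hasDerivAt_pow 2 r).add_const (m ^ 2)).sqrt h using 1
  field_simp
  ring

theorem strictMonoOn_sqrt_sq_add_sq : StrictMonoOn (fun r => √(r ^ 2 + m ^ 2)) (Ici 0) :=
  fun a ha b _ hab => sqrt_lt_sqrt (by positivity) (by nlinarith [mem_Ici.1 ha])

theorem sqrt_sq_sqrt_sq_add_sq_sub_sq {r : ℝ} (hr : 0 ≤ r) :
    √(√(r ^ 2 + m ^ 2) ^ 2 - m ^ 2) = r := by
  rw [sq_sqrt (by positivity), add_sub_cancel_right, sqrt_sq hr]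

theorem image_sqrt_sq_add_sq_Ioi (hm : 0 ≤ m) :
    (fun r => √(r ^ 2 + m ^ 2)) '' Ioi 0 = Ioi m := by
  ext E
  constructor
  · rintro ⟨r, hr, rfl⟩
    calc m = √(0 ^ 2 + m ^ 2) := by simp [sqrt_sq hm]
      _ < √(r ^ 2 + m ^ 2) :=
        strictMonoOn_sqrt_sq_add_sq (mem_Ici.2 le_rfl) (mem_Ici.2 hr.le) hr
  · intro hE
    have hmE : m < E := hE
    refine ⟨√(E ^ 2 - m ^ 2), sqrt_pos.2 (by nlinarith), ?_⟩
    dsimp only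
    rw [sq_sqrt (by nlinarith), sub_add_cancel, sqrt_sq (by linarith)]

theorem integral_Ioi_comp_sqrt_sq_add_sq (hm : 0 ≤ m) (h : ℝ → F) :
    ∫ r in Ioi (0 : ℝ), (r ^ 2 / √(r ^ 2 + m ^ 2)) • h √(r ^ 2 + m ^ 2)
      = ∫ E in Ioi m, √(E ^ 2 - m ^ 2) • h E := by
  rw [← image_sqrt_sq_add_sq_Ioi hm, integral_image_eq_integral_abs_deriv_smul measurableSet_Ioi
    (fun r (_ : 0 < r) => (hasDerivAt_sqrt_sq_add_sq (by positivity)).hasDerivWithinAt)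
    (strictMonoOn_sqrt_sq_add_sq.injOn.mono Ioi_subset_Ici_self)]
  refine setIntegral_congr_fun measurableSet_Ioi fun r (hr : 0 < r) => ?_
  rw [sqrt_sq_sqrt_sq_add_sq_sub_sq hr.le, smul_smul, abs_of_nonneg (by positivity)]
  congr 1
  ring

theorem integral_inv_Ek_smul (hm : 0 ≤ m) (h : ℝ → F) :
    ∫ k, (Ek m k)⁻¹ • h (Ek m k) = (4 * π) • ∫ E in Ioi m, √(E ^ 2 - m ^ 2) • h E := by
  rw [← integral_Ioi_comp_sqrt_sq_add_sq hm]
  refine (EuclideanSpace.integral_fun_norm_fin_three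
    fun r => (√(r ^ 2 + m ^ 2))⁻¹ • h √(r ^ 2 + m ^ 2)).trans ?_
  simp only [smul_smul, div_eq_mul_inv]

end

theorem integral_mul_heaviside_neg_sub (f : ℝ → ℝ) (c : ℝ) :
    ∫ ω, f ω * heaviside (-ω - c) = ∫ ω in Iio (-c), f ω := by
  rw [← integral_indicator measurableSet_Iio]
  congr 1 with ω
  by_cases hω : ω < -c
  · simp [heaviside, hω, show 0 < -ω - c by linarith]
  · simp [heaviside, hω, show ¬ 0 < -ω - c by linarith]

theorem vacuum_markov_rate_general (m g : ℝ) (hm : 0 ≤ m)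
    (φ : ℝ → ℝ) :
    (∫ k : EuclideanSpace ℝ (Fin 3),
        g ^ 2 * φ (-(Ek m k)) / ((2 * Real.pi) ^ 3 * (2 * Ek m k)) * (2 * Real.pi))
      = ∫ ω : ℝ, φ ω * (g ^ 2 / (2 * Real.pi)) * Real.sqrt (ω ^ 2 - m ^ 2) *
          heaviside (-ω - m) := by
  set ρ : ℝ → ℝ := fun ω => φ ω * (g ^ 2 / (2 * π)) * √(ω ^ 2 - m ^ 2)
  calc _ = ∫ k, (Ek m k)⁻¹ • (g ^ 2 / (8 * π ^ 2) * φ (-(Ek m k))) := by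
        congr 1 with k
        rw [smul_eq_mul]
        field_simp
        ring
    _ = ∫ E in Ioi m, ρ (-E) := by
        rw [integral_inv_Ek_smul hm fun E => g ^ 2 / (8 * π ^ 2) * φ (-E), ← integral_smul]
        refine setIntegral_congr_fun measurableSet_Ioi fun E _ => ?_
        simp only [ρ, smul_eq_mul, neg_sq]
        field_simp
        ring
    _ = ∫ ω in Iio (-m), ρ ω := by
        rw [integral_comp_neg_Ioi, integral_Iic_eq_integral_Iio]
    _ = _ := (integral_mul_heaviside_neg_sub ρ m).symm

theorem vacuum_markov_rate (m g : ℝ) (hm : 0 ≤ m)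
    (φ : ℝ → ℝ) (hφ : Continuous φ) (hsupp : HasCompactSupport φ) :
    (∫ k : EuclideanSpace ℝ (Fin 3),
        g ^ 2 * φ (-(Ek m k)) / ((2 * Real.pi) ^ 3 * (2 * Ek m k)) * (2 * Real.pi))
      = ∫ ω : ℝ, φ ω * (g ^ 2 / (2 * Real.pi)) * Real.sqrt (ω ^ 2 - m ^ 2) *
          heaviside (-ω - m) :=
  vacuum_markov_rate_general m g hm φ
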